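/- Bounded quantification lemma: let ⟨A, N⟩ be a complete C_ω-structure and ‖·‖ a Leibniz truth-value interpretation on the A-names. Then for every formula φ(x) with one free variable and every A-name u: ‖∃x(x ∈ u ∧ φ(x))‖ = ⨆_{x ∈ dom(u)} (u(x) ⊓ ‖φ(x)‖) and ‖∀x(x ∈ u → φ(x))‖ = ⨅_{x ∈ dom(u)} (u(x) ⇨ ‖φ(x)‖). -/

import Mathlib

universe u

/-- The universe `V^A` of `A`-names over a complete Heyting algebra `A`:
an `A`-name is a function from a set (of previously constructed `A`-names)
into `A`, here encoded by an indexing type `ι`, a family `elts` of names and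
the family `val` of their attached truth values. -/
inductive HName (A : Type u) : Type (u + 1) where
  | mk (ι : Type u) (elts : ι → HName A) (val : ι → A)

namespace HName

variable {A : Type u}

/-- The indexing type of (the domain of) a name. -/
def ι : HName A → Type u
  | mk ι _ _ => ι

/-- The members of (the domain of) a name. -/
def elts : (u : HName A) → u.ι → HName A
  | mk _ e _ => e

/-- The values attached by a name to the members of its domain. -/
def val : (u : HName A) → u.ι → A
  | mk _ _ v => v

/-- Ordinal rank of a name (used for the recursive definition of truth values). -/
noncomputable def rank : HName A → Ordinal.{u}
  | mk _ e _ => Ordinal.lsub fun i => (e i).rank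

theorem rank_lt {ι : Type u} (e : ι → HName A) (v : ι → A) (i : ι) :
    (e i).rank < (mk ι e v).rank := Ordinal.lt_lsub _ i

variable [Order.Frame A]

/-- The truth value `‖u ≈ v‖` of equality of two names, defined by the recursion
`‖u ≈ v‖ = ⨅_{x ∈ dom u} (u(x) ⇨ ‖x ∈ v‖) ⊓ ⨅_{y ∈ dom v} (v(y) ⇨ ‖y ∈ u‖)`,
where `‖x ∈ v‖ = ⨆_{y ∈ dom v} (v(y) ⊓ ‖y ≈ x‖)` is inlined. -/
noncomputable def eqVal : HName A → HName A → A
  | mk ι e a, mk κ f b =>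
      (⨅ i, a i ⇨ ⨆ j, b j ⊓ eqVal (f j) (e i)) ⊓
      (⨅ j, b j ⇨ ⨆ i, a i ⊓ eqVal (e i) (f j))
termination_by u v => max u.rank v.rank
decreasing_by
  · exact max_lt (lt_max_of_lt_right (rank_lt f b j)) (lt_max_of_lt_left (rank_lt e a i))
  · exact max_lt (lt_max_of_lt_left (rank_lt e a i)) (lt_max_of_lt_right (rank_lt f b j))

/-- The truth value `‖u ∈ v‖ = ⨆_{x ∈ dom v} (v(x) ⊓ ‖x ≈ u‖)` of membership. -/
noncomputable def memVal (u v : HName A) : A :=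
  ⨆ j : v.ι, v.val j ⊓ eqVal (v.elts j) u

end HName


/-- Terms of the first-order language of set theory expanded with all `A`-names
as constants: variables (de Bruijn indices) and names. -/
inductive Tm (A : Type u) (n : Nat) : Type (u + 1) where
  | var (i : Fin n) : Tm A n
  | name (u : HName A) : Tm A n

/-- Formulas of the first-order language with binary predicates `∈` and `≈`,
connectives `∧`, `∨`, `→`, `¬` and quantifiers `∃`, `∀`, with `A`-names as
constants; `Fml A n` are the formulas with free variables among `n` de Bruijn
indices, and the quantifiers bind the last variable of the context. -/
inductive Fml (A : Type u) : Nat → Type (u + 1) where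
  | mem {n} (t s : Tm A n) : Fml A n
  | eq {n} (t s : Tm A n) : Fml A n
  | and {n} (phi psi : Fml A n) : Fml A n
  | or {n} (phi psi : Fml A n) : Fml A n
  | imp {n} (phi psi : Fml A n) : Fml A n
  | neg {n} (phi : Fml A n) : Fml A n
  | ex {n} (phi : Fml A (n + 1)) : Fml A n
  | all {n} (phi : Fml A (n + 1)) : Fml A n

variable {A : Type u}

/-- Evaluation of a term under an assignment of names to the free variables. -/
def Tm.eval {n : Nat} : Tm A n → (Fin n → HName A) → HName A
  | var i, rho => rho i
  | name u, _ => u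

/-- Renaming (in particular, weakening) of the free variables of a term. -/
def Tm.rename {n m : Nat} (f : Fin n → Fin m) : Tm A n → Tm A m
  | var i => var (f i)
  | name u => name u

/-- Renaming (in particular, weakening) of the free variables of a formula. -/
def Fml.rename : {n m : Nat} → (Fin n → Fin m) → Fml A n → Fml A m
  | _, _, f, mem t s => mem (t.rename f) (s.rename f)
  | _, _, f, eq t s => eq (t.rename f) (s.rename f)
  | _, _, f, and phi psi => and (phi.rename f) (psi.rename f)
  | _, _, f, or phi psi => or (phi.rename f) (psi.rename f)
  | _, _, f, imp phi psi => imp (phi.rename f) (psi.rename f)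
  | _, _, f, neg phi => neg (phi.rename f)
  | _, _, f, ex phi => ex (phi.rename (Fin.snoc (Fin.castSucc ∘ f) (Fin.last _)))
  | _, _, f, all phi => all (phi.rename (Fin.snoc (Fin.castSucc ∘ f) (Fin.last _)))

/-- `φ ↔ ψ` abbreviates `(φ → ψ) ∧ (ψ → φ)`. -/
def Fml.iff {n : Nat} (phi psi : Fml A n) : Fml A n :=
  .and (.imp phi psi) (.imp psi phi)

/-- A (complete) Fidel structure for `C_ω` over the complete Heyting algebra
`A`: for each `x ∈ A`, `N x` is a nonempty set of "possible negations" of `x`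
such that `x ⊔ y = ⊤` for every `y ∈ N x` and, for every `y ∈ N x`, there is
`z ∈ N y` with `z ≤ x`. -/
def IsFidel [Order.Frame A] (N : A → Set A) : Prop :=
  ∀ x : A, (N x).Nonempty ∧ (∀ y ∈ N x, x ⊔ y = ⊤) ∧ ∀ y ∈ N x, ∃ z ∈ N y, z ≤ x

/-- A Leibniz truth-value interpretation on the `A`-names over the complete
`C_ω`-structure `⟨A, N⟩`: a map assigning to every formula (with names as
constants) and every assignment of names to its free variables a truth value in
`A`, satisfying the atomic clauses for `∈` and `≈`, the compositional clauses
for `∧`, `∨`, `→`, `∃`, `∀`, the clauses `‖¬φ‖ ∈ N ‖φ‖` and `‖¬¬φ‖ ≤ ‖φ‖` for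
the paraconsistent negation, and Leibniz law `‖u ≈ v‖ ≤ ‖φ(u) → φ(v)‖` for
every formula `φ(x)` with one free variable and all names `u`, `v`. -/
structure Interp (A : Type u) [Order.Frame A] (N : A → Set A) : Type (u + 1) where
  val : {n : Nat} → Fml A n → (Fin n → HName A) → A
  val_mem : ∀ {n} (t s : Tm A n) (rho : Fin n → HName A),
    val (.mem t s) rho = HName.memVal (t.eval rho) (s.eval rho)
  val_eq : ∀ {n} (t s : Tm A n) (rho : Fin n → HName A),
    val (.eq t s) rho = HName.eqVal (t.eval rho) (s.eval rho)
  val_and : ∀ {n} (phi psi : Fml A n) (rho : Fin n → HName A),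
    val (.and phi psi) rho = val phi rho ⊓ val psi rho
  val_or : ∀ {n} (phi psi : Fml A n) (rho : Fin n → HName A),
    val (.or phi psi) rho = val phi rho ⊔ val psi rho
  val_imp : ∀ {n} (phi psi : Fml A n) (rho : Fin n → HName A),
    val (.imp phi psi) rho = val phi rho ⇨ val psi rho
  val_ex : ∀ {n} (phi : Fml A (n + 1)) (rho : Fin n → HName A),
    val (.ex phi) rho = ⨆ u : HName A, val phi (Fin.snoc rho u)
  val_all : ∀ {n} (phi : Fml A (n + 1)) (rho : Fin n → HName A),
    val (.all phi) rho = ⨅ u : HName A, val phi (Fin.snoc rho u)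
  val_neg : ∀ {n} (phi : Fml A n) (rho : Fin n → HName A),
    val (.neg phi) rho ∈ N (val phi rho)
  val_negneg : ∀ {n} (phi : Fml A n) (rho : Fin n → HName A),
    val (.neg (.neg phi)) rho ≤ val phi rho
  leibniz : ∀ (phi : Fml A 1) (u v : HName A),
    HName.eqVal u v ≤ val phi (fun _ => u) ⇨ val phi (fun _ => v)

/-!
By Leibniz law, every formula `φ(x)` defines an extensional truth-valued predicate on names:
`‖v ≈ w‖ ⊓ ‖φ(v)‖ ≤ ‖φ(w)‖`. For such a predicate, the quantifier over all names `v` weighted by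
`‖v ∈ u‖ = ⨆ᵢ u(i) ⊓ ‖uᵢ ≈ v‖` collapses onto the members `uᵢ` of `dom u`: extensionality moves
`φ` between `v` and `uᵢ`, and conversely `u(i) ≤ ‖uᵢ ∈ u‖` because `‖uᵢ ≈ uᵢ‖ = ⊤`.
-/

namespace HName

variable [Order.Frame A]

theorem eqVal_comm (u v : HName A) : eqVal u v = eqVal v u := by
  cases u with | mk ι e a =>
  cases v with | mk κ f b =>
  rw [eqVal, eqVal, inf_comm]

theorem eqVal_self (u : HName A) : eqVal u u = ⊤ := by
  induction u with
  | mk ι e a ih =>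
    rw [eqVal, eq_top_iff]
    refine le_inf (le_iInf fun i => le_himp_iff.2 ?_) (le_iInf fun i => le_himp_iff.2 ?_) <;>
    · refine le_trans ?_ (le_iSup _ i)
      rw [ih i, inf_top_eq, top_inf_eq]

theorem val_le_memVal_elts (u : HName A) (i : u.ι) : u.val i ≤ memVal (u.elts i) u := by
  refine le_trans ?_ (le_iSup (fun j => u.val j ⊓ eqVal (u.elts j) (u.elts i)) i)
  rw [eqVal_self, inf_top_eq]

def IsExtensional (f : HName A → A) : Prop :=
  ∀ v w : HName A, eqVal v w ⊓ f v ≤ f w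

theorem iSup_memVal_inf_eq {f : HName A → A} (hf : IsExtensional f) (u : HName A) :
    ⨆ v, memVal v u ⊓ f v = ⨆ i : u.ι, u.val i ⊓ f (u.elts i) := by
  apply le_antisymm
  · refine iSup_le fun v => ?_
    rw [memVal, iSup_inf_eq]
    refine iSup_le fun i => le_iSup_of_le i ?_
    rw [inf_assoc, eqVal_comm]
    exact inf_le_inf_left _ (hf v (u.elts i))
  · exact iSup_le fun i =>
      le_iSup_of_le (u.elts i) (inf_le_inf_right _ (val_le_memVal_elts u i))

theorem iInf_memVal_himp_eq {f : HName A → A} (hf : IsExtensional f) (u : HName A) :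
    ⨅ v, memVal v u ⇨ f v = ⨅ i : u.ι, u.val i ⇨ f (u.elts i) := by
  apply le_antisymm
  · exact le_iInf fun i =>
      iInf_le_of_le (u.elts i) (himp_le_himp_right (val_le_memVal_elts u i))
  · refine le_iInf fun v => le_himp_iff.2 ?_
    rw [memVal, inf_iSup_eq]
    refine iSup_le fun i => ?_
    calc (⨅ j : u.ι, u.val j ⇨ f (u.elts j)) ⊓ (u.val i ⊓ eqVal (u.elts i) v)
        ≤ ((u.val i ⇨ f (u.elts i)) ⊓ u.val i) ⊓ eqVal (u.elts i) v := by
          rw [← inf_assoc]; exact inf_le_inf_right _ (inf_le_inf_right _ (iInf_le _ i))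
      _ ≤ eqVal (u.elts i) v ⊓ f (u.elts i) := by
          rw [inf_comm]; exact inf_le_inf_left _ himp_inf_le
      _ ≤ f v := hf _ _

end HName

namespace Interp

variable [Order.Frame A] {N : A → Set A}

theorem isExtensional_val (I : Interp A N) (phi : Fml A 1) :
    HName.IsExtensional fun v => I.val phi fun _ => v := fun v w =>
  le_himp_iff.1 (I.leibniz phi v w)

theorem val_mem_var_name (I : Interp A N) (u v : HName A) :
    I.val (.mem (.var (0 : Fin 1)) (.name u)) (fun _ => v) = HName.memVal v u :=
  I.val_mem _ _ _

end Interp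

theorem Fin.snoc_elim0 {α : Type*} (a : α) :
    (Fin.snoc (fun i : Fin 0 => i.elim0) a : Fin 1 → α) = fun _ => a :=
  funext fun i => by rw [Fin.fin_one_eq_zero i]; rfl

open HName in
theorem bounded_quantification_general {A : Type u} [Order.Frame A] {N : A → Set A}
    (I : Interp A N) (phi : Fml A 1) (u : HName A) :
    I.val (.ex (.and (.mem (.var 0) (.name u)) phi)) (fun i => i.elim0) =
        (⨆ i : u.ι, u.val i ⊓ I.val phi (fun _ => u.elts i)) ∧
      I.val (.all (.imp (.mem (.var 0) (.name u)) phi)) (fun i => i.elim0) =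
        ⨅ i : u.ι, u.val i ⇨ I.val phi (fun _ => u.elts i) := by
  simp only [I.val_ex, I.val_all, I.val_and, I.val_imp, Fin.snoc_elim0, I.val_mem_var_name]
  exact ⟨iSup_memVal_inf_eq (I.isExtensional_val phi) u,
    iInf_memVal_himp_eq (I.isExtensional_val phi) u⟩

open HName in
/-- Bounded quantification lemma: for a Leibniz truth-value interpretation over a
complete `C_ω`-structure `⟨A, N⟩`, for every formula `φ(x)` with one free
variable and every name `u`, `‖∃x(x ∈ u ∧ φ(x))‖ = ⨆_{x ∈ dom u} (u(x) ⊓ ‖φ(x)‖)`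
and `‖∀x(x ∈ u → φ(x))‖ = ⨅_{x ∈ dom u} (u(x) ⇨ ‖φ(x)‖)`. -/
theorem bounded_quantification {A : Type u} [Order.Frame A] {N : A → Set A}
    (hN : IsFidel N) (I : Interp A N) (phi : Fml A 1) (u : HName A) :
    I.val (.ex (.and (.mem (.var 0) (.name u)) phi)) (fun i => i.elim0) =
        (⨆ i : u.ι, u.val i ⊓ I.val phi (fun _ => u.elts i)) ∧
      I.val (.all (.imp (.mem (.var 0) (.name u)) phi)) (fun i => i.elim0) =
        ⨅ i : u.ι, u.val i ⇨ I.val phi (fun _ => u.elts i) :=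
  bounded_quantification_general I phi u
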